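/- arXiv:1601.06504 — 10 statements merged into one kernel-verified Lean document; each statement's English description precedes it below -/
import Mathlib

section
/- Let M=(S,P,I,AP,L) be a finite generalized possibilistic Kripke structure. Then for every state s ∈ S, r_P(s) = sup_{t ∈ S} ( P⁺(s,t) ∧ P⁺(t,t) ), where r_P(s) = sup{ inf_{i≥0} P(s_i,s_{i+1}) : s₀ = s, s_i ∈ S for all i ≥ 1 } and P⁺ is the max–min transitive closure of P. -/
open unitInterval

instance : Fact ((0:ℝ) ≤ 1) := ⟨zero_le_one⟩

open Classical in
/-- The identity fuzzy matrix `P⁰`. -/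
noncomputable def matId {S : Type*} : S → S → unitInterval :=
  fun s t => if s = t then 1 else 0

/-- Max–min composition of fuzzy matrices: `(A∘B)(s,t) = sup_u A(s,u) ∧ B(u,t)`. -/
noncomputable def matComp {S : Type*} (A B : S → S → unitInterval) : S → S → unitInterval :=
  fun s t => ⨆ u, A s u ⊓ B u t

/-- `k`-th max–min power of a fuzzy matrix (`A⁰` is the identity matrix). -/
noncomputable def matPow {S : Type*} (A : S → S → unitInterval) : ℕ → S → S → unitInterval
  | 0 => matId
  | n + 1 => matComp (matPow A n) A

/-- Transitive closure `A⁺ = sup_{k ≥ 1} Aᵏ`. -/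
noncomputable def transClos {S : Type*} (A : S → S → unitInterval) : S → S → unitInterval :=
  fun s t => ⨆ k, matPow A (k + 1) s t

/-- Reflexive–transitive closure `A* = A⁰ ∨ A⁺ = sup_{k ≥ 0} Aᵏ`. -/
noncomputable def reflTransClos {S : Type*} (A : S → S → unitInterval) : S → S → unitInterval :=
  fun s t => ⨆ k, matPow A k s t

open Classical in
/-- The diagonal fuzzy matrix `D_B` of a fuzzy state `B`. -/
noncomputable def diagMat {S : Type*} (B : S → unitInterval) : S → S → unitInterval :=
  fun s t => if s = t then B s else 0

/-- Max–min application of a fuzzy matrix to a fuzzy vector. -/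
noncomputable def matVec {S : Type*} (A : S → S → unitInterval) (v : S → unitInterval) :
    S → unitInterval :=
  fun s => ⨆ t, A s t ⊓ v t

/-- `r_P(s) = sup { inf_{i≥0} P(s_i, s_{i+1}) : s₀ = s }`. -/
noncomputable def rP {S : Type*} (P : S → S → unitInterval) : S → unitInterval :=
  fun s => ⨆ (π : ℕ → S) (_ : π 0 = s), ⨅ i, P (π i) (π (i + 1))

/-- The possibility `Po(s ⊨ Φ)` of a fuzzy path property `Φ` at a state `s`:
`sup_{π ∈ S^ω, π₀ = s} ( inf_{i≥0} P(π_i,π_{i+1}) ∧ Φ(π) )`. -/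
noncomputable def Po {S : Type*} (P : S → S → unitInterval) (Φ : (ℕ → S) → unitInterval)
    (s : S) : unitInterval :=
  ⨆ (π : ℕ → S) (_ : π 0 = s), (⨅ i, P (π i) (π (i + 1))) ⊓ Φ π

/-- The generalized possibility measure of a set of infinite state sequences:
`Po(E) = sup_{π ∈ E} ( I(π₀) ∧ inf_{i≥0} P(π_i,π_{i+1}) )`. -/
noncomputable def PoSet {S : Type*} (P : S → S → unitInterval) (Init : S → unitInterval)
    (E : Set (ℕ → S)) : unitInterval :=
  ⨆ π ∈ E, Init (π 0) ⊓ ⨅ i, P (π i) (π (i + 1))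

/-!
An infinite path from `s` of weight `c` meets some state `t` twice after leaving `s`, so
`c ≤ P⁺(s,t) ∧ P⁺(t,t)`. Conversely, since `S` is finite every supremum in a max–min power is
attained, so `c ≤ Pᵏ(s,t)` yields a chain of `k` transitions of possibility at least `c`; a chain
from `s` to `t` followed by a cycle through `t` repeated forever is an infinite path of weight
at least `c`.
-/

section

variable {α : Type*} {R : α → α → Prop}

theorem exists_seq_of_forall_exists_rel {X : Set α} (h : ∀ x ∈ X, ∃ y ∈ X, R x y) {a : α}
    (ha : a ∈ X) : ∃ π : ℕ → α, π 0 = a ∧ ∀ n, R (π n) (π (n + 1)) := by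
  choose! next hnextX hnext using h
  have hmem : ∀ n, next^[n] a ∈ X := fun n => by
    induction n with
    | zero => exact ha
    | succ n ih => rw [Function.iterate_succ_apply']; exact hnextX _ ih
  refine ⟨fun n => next^[n] a, rfl, fun n => ?_⟩
  simpa only [Function.iterate_succ_apply'] using hnext _ (hmem n)

theorem Relation.exists_seq_of_reflTransGen_of_transGen {s t : α}
    (hst : ReflTransGen R s t) (htt : TransGen R t t) :
    ∃ π : ℕ → α, π 0 = s ∧ ∀ n, R (π n) (π (n + 1)) := by
  refine exists_seq_of_forall_exists_rel (X := {u | ReflTransGen R u t}) (fun u hu => ?_) hst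
  rcases ReflTransGen.cases_head_iff.mp hu with rfl | ⟨v, huv, hvt⟩
  · obtain ⟨v, huv, hvt⟩ := TransGen.head'_iff.mp htt
    exact ⟨v, hvt, huv⟩
  · exact ⟨v, hvt, huv⟩

end

section

variable {S : Type*} (P : S → S → unitInterval)

noncomputable def pathWeight (π : ℕ → S) : unitInterval :=
  ⨅ i, P (π i) (π (i + 1))

theorem matPow_one : matPow P 1 = P := by
  ext s t : 2
  refine le_antisymm (iSup_le fun u => ?_) (le_iSup_of_le s ?_)
  · by_cases hsu : s = u
    · subst hsu; exact inf_le_right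
    · simp [matPow, matId, hsu]
  · simp [matPow, matId, unitInterval.le_one']

theorem pathWeight_le_matPow (π : ℕ → S) (a : ℕ) :
    ∀ k, pathWeight P π ≤ matPow P k (π a) (π (a + k))
  | 0 => by simpa [matPow, matId] using unitInterval.le_one'
  | k + 1 => le_iSup_of_le (π (a + k))
      (le_inf (pathWeight_le_matPow π a k) (iInf_le _ (a + k)))

theorem pathWeight_le_transClos (π : ℕ → S) {a b : ℕ} (hab : a < b) :
    pathWeight P π ≤ transClos P (π a) (π b) := by
  obtain ⟨k, rfl⟩ := Nat.exists_eq_add_of_lt hab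
  exact le_iSup_of_le k (pathWeight_le_matPow P π a (k + 1))

theorem pathWeight_le_sup_transClos [Finite S] (π : ℕ → S) :
    pathWeight P π ≤ ⨆ t, transClos P (π 0) t ⊓ transClos P t t := by
  obtain ⟨a, b, hab, hrep⟩ := Set.finite_univ.exists_lt_map_eq_of_forall_mem
    (f := fun n => π (n + 1)) fun _ => Set.mem_univ _
  refine le_iSup_of_le (π (a + 1)) (le_inf (pathWeight_le_transClos P π a.succ_pos) ?_)
  have hcycle := pathWeight_le_transClos P π (Nat.succ_lt_succ hab)
  rwa [← hrep] at hcycle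

theorem rP_le_sup_transClos [Finite S] (s : S) :
    rP P s ≤ ⨆ t, transClos P s t ⊓ transClos P t t :=
  iSup₂_le fun π hπ => hπ ▸ pathWeight_le_sup_transClos P π

theorem transGen_of_le_matPow [Finite S] {c : unitInterval} {s t : S} :
    ∀ {k}, c ≤ matPow P (k + 1) s t → Relation.TransGen (fun u v => c ≤ P u v) s t
  | 0, h => .single (matPow_one P ▸ h)
  | k + 1, h => by
    have : Nonempty S := ⟨s⟩
    obtain ⟨u, hu⟩ := exists_eq_ciSup_of_finite (f := fun u => matPow P (k + 1) s u ⊓ P u t)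
    have hcu : c ≤ matPow P (k + 1) s u ⊓ P u t := hu ▸ h
    exact .tail (transGen_of_le_matPow (le_inf_iff.mp hcu).1) (le_inf_iff.mp hcu).2

theorem le_rP_of_le_matPow [Finite S] {c : unitInterval} {s t : S} {k m : ℕ}
    (hst : c ≤ matPow P (k + 1) s t) (htt : c ≤ matPow P (m + 1) t t) : c ≤ rP P s := by
  obtain ⟨π, rfl, hπ⟩ := Relation.exists_seq_of_reflTransGen_of_transGen
    (transGen_of_le_matPow P hst).to_reflTransGen (transGen_of_le_matPow P htt)
  exact le_iSup₂_of_le π rfl (le_iInf hπ)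

theorem sup_transClos_le_rP [Finite S] (s : S) :
    ⨆ t, transClos P s t ⊓ transClos P t t ≤ rP P s :=
  iSup_le fun t => by
    simp only [transClos, iSup_inf_eq, inf_iSup_eq]
    exact iSup₂_le fun _ _ => le_rP_of_le_matPow P inf_le_left inf_le_right

end

theorem rP_eq_sup_transClos_general {S : Type*} [Fintype S]
    (P : S → S → unitInterval)
    (s : S) :
    rP P s = ⨆ t : S, transClos P s t ⊓ transClos P t t :=
  le_antisymm (rP_le_sup_transClos P s) (sup_transClos_le_rP P s)

/-- For a finite GPKS `M = (S, P, Init, AP, L)`,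
`r_P(s) = sup_{t ∈ S} ( P⁺(s,t) ∧ P⁺(t,t) )` for every state `s`. -/
theorem rP_eq_sup_transClos {S : Type*} [Fintype S] [Nonempty S]
    {AP : Type*} [Fintype AP]
    (P : S → S → unitInterval) (Init : S → unitInterval) (L : S → AP → unitInterval)
    (s : S) :
    rP P s = ⨆ t : S, transClos P s t ⊓ transClos P t t :=
  rP_eq_sup_transClos_general P s
end

section
/- Let M=(S,P,I,AP,L) be a finite generalized possibilistic Kripke structure. Then P is normal, i.e. sup_{t∈S} P(s,t) = 1 for every state s, if and only if r_P(s) = 1 for every state s ∈ S. -/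
/-!
A normal fuzzy relation on a finite state space attains its supremum: every state `s` has a
successor `f s` with `P(s, f s) = 1`, and iterating `f` from `s` gives a path all of whose
transitions have possibility `1`. Conversely the first transition of any path from `s` already
bounds `r_P(s)` by `sup_t P(s, t)`.
-/

open unitInterval

section

variable {S : Type*} (P : S → S → unitInterval)

theorem rP_le_iSup (s : S) : rP P s ≤ ⨆ t, P s t :=
  iSup₂_le fun π hπ => (iInf_le _ 0).trans (hπ ▸ le_iSup _ (π 1))

theorem rP_eq_one_of_forall_eq_one {f : S → S} (hf : ∀ s, P s (f s) = 1) (s : S) :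
    rP P s = 1 := by
  have hpath : ∀ i, P (f^[i] s) (f^[i + 1] s) = 1 := fun i => by
    rw [Function.iterate_succ_apply']
    exact hf _
  refine le_antisymm le_one' ?_
  calc (1 : unitInterval) ≤ ⨅ i, P (f^[i] s) (f^[i + 1] s) := le_iInf fun i => (hpath i).ge
    _ ≤ rP P s := le_iSup₂_of_le (fun i => f^[i] s) rfl le_rfl

theorem exists_eq_one_of_iSup_eq_one [Finite S] {s : S} (h : ⨆ t, P s t = 1) :
    ∃ t, P s t = 1 := by
  have : Nonempty S := ⟨s⟩
  obtain ⟨t, ht⟩ := exists_eq_ciSup_of_finite (f := P s)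
  exact ⟨t, ht.trans h⟩

end

theorem normal_iff_rP_eq_one_general {S : Type*} [Fintype S]
    (P : S → S → unitInterval) :
    (∀ s : S, (⨆ t : S, P s t) = 1) ↔ (∀ s : S, rP P s = 1) := by
  constructor
  · intro hnormal
    choose f hf using fun s => exists_eq_one_of_iSup_eq_one P (hnormal s)
    exact rP_eq_one_of_forall_eq_one P hf
  · intro hrP s
    exact le_antisymm (iSup_le fun _ => le_one') ((hrP s).symm.le.trans (rP_le_iSup P s))

/-- For a finite GPKS `M = (S, P, Init, AP, L)`, `P` is normal
(`sup_{t∈S} P(s,t) = 1` for every `s`) iff `r_P(s) = 1` for every state `s`. -/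
theorem normal_iff_rP_eq_one {S : Type*} [Fintype S] [Nonempty S]
    {AP : Type*} [Fintype AP]
    (P : S → S → unitInterval) (Init : S → unitInterval) (L : S → AP → unitInterval) :
    (∀ s : S, (⨆ t : S, P s t) = 1) ↔ (∀ s : S, rP P s = 1) :=
  normal_iff_rP_eq_one_general P
end

section
/- Let M=(S,P,I,AP,L) be a finite generalized possibilistic Kripke structure. For a finite sequence of states s₀,…,s_n with n > 0, the generalized possibility measure of its cylinder set satisfies Po(Cyl(s₀⋯s_n)) = I(s₀) ∧ inf_{0≤i≤n−1} P(s_i,s_{i+1}) ∧ r_P(s_n), and for n = 0, Po(Cyl(s₀)) = I(s₀) ∧ r_P(s₀). -/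
open unitInterval

/-- The cylinder set spanned by the first `n + 1` states of `ω`: all infinite
sequences having `ω 0 ⋯ ω n` as a prefix. -/
def Cyl {S : Type*} (ω : ℕ → S) (n : ℕ) : Set (ℕ → S) :=
  {π : ℕ → S | ∀ i ≤ n, π i = ω i}

/-! A path through the cylinder `Cyl ω n` is the fixed prefix `ω 0 ⋯ ω n` followed by an
arbitrary path from `ω n`, and its possibility splits as a minimum over these two parts.
Dropping the first `n` states maps the cylinder onto the paths starting at `ω n`, so taking
the supremum over the cylinder turns the second part into `r_P(ω n)`. -/

theorem iInf_eq_iInf_range_inf_iInf_add {α : Type*} [CompleteLattice α] (f : ℕ → α) (n : ℕ) :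
    ⨅ i, f i = (⨅ i ∈ Finset.range n, f i) ⊓ ⨅ i, f (n + i) := by
  refine le_antisymm (le_inf (le_iInf₂ fun i _ => iInf_le f i) (le_iInf fun i => iInf_le f _))
    (le_iInf fun i => ?_)
  rcases lt_or_ge i n with hi | hi
  · exact inf_le_left.trans (iInf₂_le i (Finset.mem_range.mpr hi))
  · obtain ⟨k, rfl⟩ := Nat.exists_eq_add_of_le hi
    exact inf_le_right.trans (iInf_le _ k)

section Cylinder

variable {S : Type*} (P : S → S → unitInterval)

theorem image_drop_cyl (ω : ℕ → S) (n : ℕ) :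
    (fun π i => π (n + i)) '' Cyl ω n = {p | p 0 = ω n} := by
  ext p
  constructor
  · rintro ⟨π, hπ, rfl⟩
    exact hπ n le_rfl
  · intro hp
    refine ⟨fun i => if i < n then ω i else p (i - n), fun i hi => ?_, ?_⟩
    · rcases hi.lt_or_eq with hi | rfl
      · simp [hi]
      · simpa using hp
    · funext i
      simp

theorem iInf_transition_of_mem_cyl {ω π : ℕ → S} {n : ℕ} (hπ : π ∈ Cyl ω n) :
    ⨅ i, P (π i) (π (i + 1)) =
      (⨅ i ∈ Finset.range n, P (ω i) (ω (i + 1))) ⊓ ⨅ i, P (π (n + i)) (π (n + i + 1)) := by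
  rw [iInf_eq_iInf_range_inf_iInf_add _ n]
  congr 1
  refine iInf_congr fun i => iInf_congr fun hi => ?_
  have hi : i < n := Finset.mem_range.mp hi
  rw [hπ i hi.le, hπ (i + 1) hi]

theorem rP_eq_iSup_cyl (ω : ℕ → S) (n : ℕ) :
    rP P (ω n) = ⨆ π ∈ Cyl ω n, ⨅ i, P (π (n + i)) (π (n + i + 1)) := by
  calc rP P (ω n) = ⨆ p ∈ {p : ℕ → S | p 0 = ω n}, ⨅ i, P (p i) (p (i + 1)) := rfl
    _ = _ := by rw [← image_drop_cyl, iSup_image]; rfl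

theorem PoSet_cyl (Init : S → unitInterval) (ω : ℕ → S) (n : ℕ) :
    PoSet P Init (Cyl ω n) =
      Init (ω 0) ⊓ (⨅ i ∈ Finset.range n, P (ω i) (ω (i + 1))) ⊓ rP P (ω n) := by
  rw [rP_eq_iSup_cyl, inf_iSup₂_eq, PoSet]
  refine iSup_congr fun π => iSup_congr fun hπ => ?_
  rw [iInf_transition_of_mem_cyl P hπ, hπ 0 (Nat.zero_le n), inf_assoc]

end Cylinder

theorem PoSet_cylinder_general {S : Type*}
    (P : S → S → unitInterval) (Init : S → unitInterval)
    (ω : ℕ → S) (n : ℕ) :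
    (0 < n →
      PoSet P Init (Cyl ω n) =
        Init (ω 0) ⊓ (⨅ i ∈ Finset.range n, P (ω i) (ω (i + 1))) ⊓ rP P (ω n)) ∧
    (n = 0 → PoSet P Init (Cyl ω n) = Init (ω 0) ⊓ rP P (ω 0)) := by
  refine ⟨fun _ => PoSet_cyl P Init ω n, ?_⟩
  rintro rfl
  simp [PoSet_cyl]

/-- For a finite GPKS, the generalized possibility measure of a
cylinder set satisfies
`Po(Cyl(s₀⋯s_n)) = I(s₀) ∧ inf_{0 ≤ i ≤ n−1} P(s_i,s_{i+1}) ∧ r_P(s_n)` for `n > 0`,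
and `Po(Cyl(s₀)) = I(s₀) ∧ r_P(s₀)` for `n = 0`. -/
theorem PoSet_cylinder {S : Type*} [Fintype S] [Nonempty S]
    {AP : Type*} [Fintype AP]
    (P : S → S → unitInterval) (Init : S → unitInterval) (L : S → AP → unitInterval)
    (ω : ℕ → S) (n : ℕ) :
    (0 < n →
      PoSet P Init (Cyl ω n) =
        Init (ω 0) ⊓ (⨅ i ∈ Finset.range n, P (ω i) (ω (i + 1))) ⊓ rP P (ω n)) ∧
    (n = 0 → PoSet P Init (Cyl ω n) = Init (ω 0) ⊓ rP P (ω 0)) :=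
  PoSet_cylinder_general P Init ω n
end

section
/- Let M=(S,P,I,AP,L) be a finite generalized possibilistic Kripke structure and B : S → [0,1] a fuzzy state. Then for every state s ∈ S, the reachability possibility satisfies Po(s ⊨ ◇B) = (P* ∘ D_B ∘ r_P)(s), i.e. sup_{π ∈ S^ω, π₀ = s} ( inf_{i≥0} P(π_i,π_{i+1}) ∧ sup_{j≥0} B(π_j) ) = sup_{t∈S} ( P*(s,t) ∧ B(t) ∧ r_P(t) ). -/
open unitInterval

/-!
A path `π` from `s` that meets `B` at step `j` splits into the prefix `π₀ … π_j`, whose weight is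
at most `Pʲ(s, π_j)`, and the infinite tail from `π_j`, whose weight is at most `r_P(π_j)`.
Conversely, `Pᵏ(s, t)` is a supremum of weights of length-`k` paths from `s` to `t`, and any such
path followed by an infinite path from `t` is a path from `s` meeting `B` at step `k`.
-/

section Paths

variable {S : Type*} (P : S → S → unitInterval)

theorem iInf_fin_le_matPow (k : ℕ) (f : ℕ → S) :
    (⨅ i : Fin k, P (f i) (f (i + 1))) ≤ matPow P k (f 0) (f k) := by
  induction k with
  | zero => exact le_top.trans_eq (if_pos rfl).symm
  | succ k ih =>
    refine le_iSup_of_le (f k) (le_inf ?_ (iInf_le_of_le (Fin.last k) le_rfl))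
    exact (le_iInf fun i : Fin k => iInf_le_of_le i.castSucc le_rfl).trans ih

theorem matPow_le_iSup_paths (k : ℕ) (s t : S) :
    matPow P k s t ≤
      ⨆ (f : ℕ → S) (_ : f 0 = s) (_ : f k = t), ⨅ i : Fin k, P (f i) (f (i + 1)) := by
  classical
  induction k generalizing t with
  | zero =>
    by_cases hst : s = t
    · subst hst
      exact le_iSup₂_of_le (fun _ => s) rfl (le_iSup_of_le rfl (by simp))
    · simp only [matPow, matId, if_neg hst]
      exact bot_le
  | succ k ih =>
    refine iSup_le fun u => ?_
    refine (inf_le_inf_right _ (ih u)).trans ?_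
    simp only [iSup_inf_eq]
    refine iSup₂_le fun f hf0 => iSup_le fun hfk => ?_
    refine le_iSup₂_of_le (Function.update f (k + 1) t) (by simpa using hf0)
      (le_iSup_of_le (Function.update_self ..) (le_iInf fun i => ?_))
    rcases (Nat.lt_succ_iff.mp i.isLt).lt_or_eq with hi | hi
    · rw [Function.update_of_ne (by omega), Function.update_of_ne (by omega)]
      exact inf_le_left.trans (iInf_le _ (⟨i, hi⟩ : Fin k))
    · rw [hi, Function.update_self, Function.update_of_ne (by omega), hfk]
      exact inf_le_right

theorem iInf_le_reflTransClos (π : ℕ → S) (j : ℕ) :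
    (⨅ i, P (π i) (π (i + 1))) ≤ reflTransClos P (π 0) (π j) :=
  (le_iInf fun i : Fin j => iInf_le _ (i : ℕ)).trans <|
    (iInf_fin_le_matPow P j π).trans (le_iSup (fun k => matPow P k (π 0) (π j)) j)

theorem iInf_le_rP (π : ℕ → S) (j : ℕ) :
    (⨅ i, P (π i) (π (i + 1))) ≤ rP P (π j) :=
  le_iSup₂_of_le (fun i => π (j + i)) rfl (le_iInf fun i => iInf_le_of_le (j + i) le_rfl)

def pathAppend (k : ℕ) (f τ : ℕ → S) : ℕ → S :=
  fun i => if i < k then f i else τ (i - k)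

variable {P} {k : ℕ} {f τ : ℕ → S}

theorem pathAppend_apply_zero (h : f k = τ 0) : pathAppend k f τ 0 = f 0 := by
  rcases k.eq_zero_or_pos with rfl | hk
  · simp [pathAppend, h]
  · simp [pathAppend, hk]

theorem pathAppend_apply_self : pathAppend k f τ k = τ 0 := by
  simp [pathAppend]

theorem iInf_inf_iInf_le_pathAppend (h : f k = τ 0) :
    (⨅ i : Fin k, P (f i) (f (i + 1))) ⊓ (⨅ i, P (τ i) (τ (i + 1))) ≤
      ⨅ i, P (pathAppend k f τ i) (pathAppend k f τ (i + 1)) := by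
  refine le_iInf fun i => ?_
  by_cases hi : i < k
  · have hsucc : pathAppend k f τ (i + 1) = f (i + 1) := by
      rcases (Nat.succ_le_of_lt hi).lt_or_eq with hi' | hi'
      · simp [pathAppend, hi']
      · subst hi'
        simp [pathAppend, h]
    rw [hsucc, pathAppend, if_pos hi]
    exact inf_le_left.trans (iInf_le _ (⟨i, hi⟩ : Fin k))
  · have hsucc : pathAppend k f τ (i + 1) = τ (i - k + 1) := by
      simp [pathAppend, show ¬i + 1 < k by omega, show i + 1 - k = i - k + 1 by omega]
    rw [hsucc, pathAppend, if_neg hi]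
    exact inf_le_right.trans (iInf_le _ (i - k))

theorem matPow_inf_inf_le_Po_eventually (B : S → unitInterval) {s t : S} (hτ : τ 0 = t) :
    matPow P k s t ⊓ B t ⊓ (⨅ i, P (τ i) (τ (i + 1))) ≤ Po P (fun π => ⨆ j, B (π j)) s := by
  refine (inf_le_inf_right _ (inf_le_inf_right _ (matPow_le_iSup_paths P k s t))).trans ?_
  simp only [iSup_inf_eq]
  refine iSup₂_le fun f hf0 => iSup_le fun hfk => ?_
  have h : f k = τ 0 := hfk.trans hτ.symm
  refine le_iSup₂_of_le (pathAppend k f τ) ((pathAppend_apply_zero h).trans hf0) <|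
    le_inf ?_ ?_
  · exact (inf_le_inf_right _ inf_le_left).trans (iInf_inf_iInf_le_pathAppend h)
  · refine le_iSup_of_le k (inf_le_left.trans (inf_le_right.trans ?_))
    rw [pathAppend_apply_self, hτ]

end Paths

theorem Po_eventually_eq_general {S : Type*}
    (P : S → S → unitInterval)
    (B : S → unitInterval) (s : S) :
    Po P (fun π => ⨆ j, B (π j)) s =
      ⨆ t : S, reflTransClos P s t ⊓ B t ⊓ rP P t := by
  apply le_antisymm
  · refine iSup₂_le fun π hπ => ?_
    subst hπ
    rw [inf_iSup_eq]
    exact iSup_le fun j => le_iSup_of_le (π j) <|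
      le_inf (inf_le_inf_right _ (iInf_le_reflTransClos P π j))
        (inf_le_left.trans (iInf_le_rP P π j))
  · refine iSup_le fun t => ?_
    simp only [reflTransClos, rP, iSup_inf_eq, inf_iSup_eq]
    exact iSup₂_le fun τ hτ => iSup_le fun k => matPow_inf_inf_le_Po_eventually B hτ

/-- For a finite GPKS and a fuzzy state `B : S → [0,1]`, the
reachability possibility satisfies `Po(s ⊨ ◇B) = (P* ∘ D_B ∘ r_P)(s)`, i.e.
`sup_{π, π₀=s} ( inf_i P(π_i,π_{i+1}) ∧ sup_j B(π_j) ) = sup_t ( P*(s,t) ∧ B(t) ∧ r_P(t) )`. -/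
theorem Po_eventually_eq {S : Type*} [Fintype S] [Nonempty S]
    {AP : Type*} [Fintype AP]
    (P : S → S → unitInterval) (Init : S → unitInterval) (L : S → AP → unitInterval)
    (B : S → unitInterval) (s : S) :
    Po P (fun π => ⨆ j, B (π j)) s =
      ⨆ t : S, reflTransClos P s t ⊓ B t ⊓ rP P t :=
  Po_eventually_eq_general P B s
end

section
/- Let M=(S,P,I,AP,L) be a finite generalized possibilistic Kripke structure and B : S → [0,1] a fuzzy state. Then the vector Po(□B) = (Po(s ⊨ □B))_{s∈S} is the greatest fixed point of the monotone operator f_B on [0,1]^S defined by f_B(Z) = B ∧ (P ∘ D_Z ∘ r_P), i.e. f_B(Z)(s) = B(s) ∧ sup_{t∈S} ( P(s,t) ∧ Z(t) ∧ r_P(t) ). -/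
open unitInterval

/-!
Removing the first step of a path splits both its weight `inf_i P(π_i, π_{i+1})` and
`(□B)(π)` into a head term and the same quantity for the tail, so `v = Po(□B)` satisfies
`v(s) = B(s) ∧ sup_t (P(s,t) ∧ v(t))`; the factor `r_P` in `f_B` is harmless because
`v ≤ r_P`. Conversely, if `Z ≤ f_B(Z)` on a finite state space, following from each state a
successor that attains the supremum produces a path along which `Z(s)` bounds every
transition and every value of `B`, whence `Z(s) ≤ v(s)`.
-/

section

open Stream'

variable {S : Type*}

lemma Po_le_rP (P : S → S → I) (Φ : (ℕ → S) → I) (s : S) : Po P Φ s ≤ rP P s :=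
  iSup₂_mono fun _ _ => inf_le_left

lemma le_Po (P : S → S → I) (Φ : (ℕ → S) → I) (π : ℕ → S) :
    (⨅ i, P (π i) (π (i + 1))) ⊓ Φ π ≤ Po P Φ (π 0) :=
  le_iSup₂ (f := fun π' (_ : π' 0 = π 0) => (⨅ i, P (π' i) (π' (i + 1))) ⊓ Φ π') π rfl

lemma Po_always_le (P : S → S → I) (B : S → I) (s : S) :
    Po P (fun π => ⨅ j, B (π j)) s ≤ B s ⊓ ⨆ t, P s t ⊓ Po P (fun π => ⨅ j, B (π j)) t := by
  refine iSup₂_le fun π hπ => ?_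
  subst hπ
  have weight_split : (⨅ i, P (π i) (π (i + 1))) =
      P (π 0) (π 1) ⊓ ⨅ i, P (tail π i) (tail π (i + 1)) :=
    (inf_iInf_nat_succ _).symm
  have always_split : (⨅ j, B (π j)) = B (π 0) ⊓ ⨅ j, B (tail π j) :=
    (inf_iInf_nat_succ _).symm
  have tail_le := le_Po P (fun π => ⨅ j, B (π j)) (tail π)
  dsimp only at tail_le ⊢
  rw [weight_split, always_split]
  refine le_inf (inf_le_right.trans inf_le_left) (le_trans ?_ (le_iSup _ (π 1)))
  exact le_inf (inf_le_left.trans inf_le_left)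
    ((inf_le_inf inf_le_right inf_le_right).trans tail_le)

lemma le_Po_always (P : S → S → I) (B : S → I) (s : S) :
    B s ⊓ ⨆ t, P s t ⊓ Po P (fun π => ⨅ j, B (π j)) t ≤ Po P (fun π => ⨅ j, B (π j)) s := by
  simp only [Po, inf_iSup_eq, iSup_le_iff]
  intro t ρ hρ
  subst hρ
  have cons_weight : (⨅ i, P (cons s ρ i) (cons s ρ (i + 1))) =
      P s (ρ 0) ⊓ ⨅ i, P (ρ i) (ρ (i + 1)) :=
    (inf_iInf_nat_succ _).symm
  have cons_always : (⨅ j, B (cons s ρ j)) = B s ⊓ ⨅ j, B (ρ j) :=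
    (inf_iInf_nat_succ _).symm
  refine le_trans ?_ (le_Po P (fun π => ⨅ j, B (π j)) (cons s ρ))
  rw [cons_weight, cons_always]
  exact le_inf (le_inf (inf_le_right.trans inf_le_left)
    (inf_le_right.trans (inf_le_right.trans inf_le_left)))
    (le_inf inf_le_left (inf_le_right.trans (inf_le_right.trans inf_le_right)))

lemma Po_always_eq (P : S → S → I) (B : S → I) (s : S) :
    Po P (fun π => ⨅ j, B (π j)) s = B s ⊓ ⨆ t, P s t ⊓ Po P (fun π => ⨅ j, B (π j)) t :=
  (Po_always_le P B s).antisymm (le_Po_always P B s)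

lemma le_Po_always_of_le [Finite S] (P : S → S → I) (B : S → I) (Z : S → I)
    (hZ : ∀ s, Z s ≤ B s ⊓ ⨆ t, P s t ⊓ Z t) : Z ≤ Po P (fun π => ⨅ j, B (π j)) := by
  have succ_exists : ∀ s, ∃ t, Z s ≤ B s ⊓ (P s t ⊓ Z t) := by
    intro s
    have : Nonempty S := ⟨s⟩
    obtain ⟨t, ht⟩ := Finite.exists_max fun t => P s t ⊓ Z t
    exact ⟨t, (hZ s).trans (inf_le_inf_left _ (iSup_le ht))⟩
  choose succ hsucc using succ_exists
  intro s
  set π : ℕ → S := fun n => succ^[n] s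
  have step : ∀ n, Z (π n) ≤ B (π n) ⊓ (P (π n) (π (n + 1)) ⊓ Z (π (n + 1))) := fun n => by
    simp only [π, Function.iterate_succ_apply']
    exact hsucc _
  have along : ∀ n, Z s ≤ Z (π n) := by
    intro n
    induction n with
    | zero => rfl
    | succ n ih => exact ih.trans ((step n).trans (inf_le_right.trans inf_le_right))
  refine le_trans ?_ (le_Po P (fun π => ⨅ j, B (π j)) π)
  exact le_inf (le_iInf fun i => (along i).trans ((step i).trans (inf_le_right.trans inf_le_left)))
    (le_iInf fun j => (along j).trans ((step j).trans inf_le_left))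

end

theorem Po_always_greatest_fixed_point_general {S : Type*} [Fintype S]
    (P : S → S → unitInterval)
    (B : S → unitInterval)
    (fB : (S → unitInterval) → S → unitInterval)
    (hfB : ∀ Z s, fB Z s = B s ⊓ ⨆ t : S, P s t ⊓ Z t ⊓ rP P t)
    (v : S → unitInterval)
    (hv : ∀ s, v s = Po P (fun π => ⨅ j, B (π j)) s) :
    fB v = v ∧ ∀ Z : S → unitInterval, fB Z = Z → Z ≤ v := by
  obtain rfl : v = Po P (fun π => ⨅ j, B (π j)) := funext hv
  refine ⟨funext fun s => ?_, fun Z hZ => le_Po_always_of_le P B Z fun s => ?_⟩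
  · have drop_rP : ∀ t, P s t ⊓ Po P (fun π => ⨅ j, B (π j)) t ⊓ rP P t =
        P s t ⊓ Po P (fun π => ⨅ j, B (π j)) t :=
      fun t => inf_eq_left.mpr (inf_le_right.trans (Po_le_rP P _ t))
    simp only [hfB, drop_rP, ← Po_always_eq]
  · calc Z s = fB Z s := by rw [hZ]
      _ = B s ⊓ ⨆ t, P s t ⊓ Z t ⊓ rP P t := hfB Z s
      _ ≤ B s ⊓ ⨆ t, P s t ⊓ Z t := inf_le_inf_left _ (iSup_mono fun _ => inf_le_left)

/-- For a finite GPKS and a fuzzy state `B`, the vector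
`Po(□B) = (Po(s ⊨ □B))_{s∈S}` is the greatest fixed point of the monotone operator
`f_B(Z)(s) = B(s) ∧ sup_{t∈S} ( P(s,t) ∧ Z(t) ∧ r_P(t) )` on `[0,1]^S`. -/
theorem Po_always_greatest_fixed_point {S : Type*} [Fintype S] [Nonempty S]
    {AP : Type*} [Fintype AP]
    (P : S → S → unitInterval) (Init : S → unitInterval) (L : S → AP → unitInterval)
    (B : S → unitInterval)
    (fB : (S → unitInterval) → S → unitInterval)
    (hfB : ∀ Z s, fB Z s = B s ⊓ ⨆ t : S, P s t ⊓ Z t ⊓ rP P t)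
    (v : S → unitInterval)
    (hv : ∀ s, v s = Po P (fun π => ⨅ j, B (π j)) s) :
    fB v = v ∧ ∀ Z : S → unitInterval, fB Z = Z → Z ≤ v :=
  Po_always_greatest_fixed_point_general P B fB hfB v hv
end

section
/- Let M=(S,P,I,AP,L) be a finite generalized possibilistic Kripke structure and B, C : S → [0,1] fuzzy states. Then for every n ≥ 0 and every state s ∈ S, the bounded constrained reachability possibility satisfies Po(s ⊨ C U^{≤n} B) = ( sup_{0≤i≤n} (D_C ∘ P)^i ∘ D_B ∘ r_P )(s), where (C U^{≤n} B)(π) = sup_{0≤j≤n} ( B(π_j) ∧ inf_{0≤i<j} C(π_i) ). -/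
open unitInterval

/-! Split the until formula over the step `j ≤ n` at which `B` is reached. A path from `s`
that satisfies `C` before step `j` is a prefix of length `j`, whose best weight is
`(D_C ∘ P)^j`, followed by an infinite tail from `π j`, whose best weight is `r_P (π j)`.
Induction on `j` peels off the first transition, which matches
`(D_C ∘ P)^(j+1) = (D_C ∘ P) ∘ (D_C ∘ P)^j` (associativity of max–min composition). -/

section FuzzyMatrix

variable {S : Type*}

theorem matComp_assoc (A B C : S → S → unitInterval) :
    matComp (matComp A B) C = matComp A (matComp B C) := by
  ext s t : 2
  simp only [matComp, iSup_inf_eq, inf_iSup_eq, inf_assoc]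
  exact iSup_comm

theorem matVec_matComp (A B : S → S → unitInterval) (v : S → unitInterval) :
    matVec (matComp A B) v = matVec A (matVec B v) := by
  ext s : 1
  simp only [matVec, matComp, iSup_inf_eq, inf_iSup_eq, inf_assoc]
  exact iSup_comm

theorem matVec_iSup {ι : Sort*} (A : ι → S → S → unitInterval) (v : S → unitInterval) (s : S) :
    matVec (fun u w => ⨆ i, A i u w) v s = ⨆ i, matVec (A i) v s := by
  simp only [matVec, iSup_inf_eq]
  exact iSup_comm

theorem matId_eq_diagMat_top : (matId : S → S → unitInterval) = diagMat ⊤ := rfl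

theorem matComp_diagMat_left (B : S → unitInterval) (A : S → S → unitInterval) (s t : S) :
    matComp (diagMat B) A s t = B s ⊓ A s t := by
  classical
  refine le_antisymm (iSup_le fun u => ?_) (le_iSup_of_le s (by simp [diagMat]))
  by_cases h : s = u
  · subst h; simp [diagMat]
  · simp [diagMat, h]

theorem matComp_diagMat_right (A : S → S → unitInterval) (B : S → unitInterval) (s t : S) :
    matComp A (diagMat B) s t = A s t ⊓ B t := by
  classical
  refine le_antisymm (iSup_le fun u => ?_) (le_iSup_of_le t (by simp [diagMat]))
  by_cases h : u = t
  · subst h; simp [diagMat]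
  · simp [diagMat, h]

theorem matPow_succ' (A : S → S → unitInterval) (n : ℕ) :
    matPow A (n + 1) = matComp A (matPow A n) := by
  induction n with
  | zero =>
    ext s t : 2
    simp only [matPow, matId_eq_diagMat_top, matComp_diagMat_left, matComp_diagMat_right,
      Pi.top_apply, top_inf_eq, inf_top_eq]
  | succ n ih =>
    show matComp (matPow A (n + 1)) A = matComp A (matComp (matPow A n) A)
    rw [ih, matComp_assoc]

theorem matVec_diagMat (B v : S → unitInterval) (s : S) :
    matVec (diagMat B) v s = B s ⊓ v s :=
  matComp_diagMat_left B (fun u _ => v u) s s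

theorem matVec_matComp_diagMat (A : S → S → unitInterval) (B v : S → unitInterval) :
    matVec (matComp A (diagMat B)) v = matVec A (fun t => B t ⊓ v t) := by
  ext s : 1
  simp only [matVec, matComp_diagMat_right, inf_assoc]

end FuzzyMatrix

section Possibility

variable {S : Type*} (P : S → S → unitInterval)

theorem Po_iSup {ι : Sort*} (Φ : ι → (ℕ → S) → unitInterval) (s : S) :
    Po P (fun π => ⨆ k, Φ k π) s = ⨆ k, Po P (Φ k) s := by
  simp only [Po, inf_iSup_eq]
  rw [iSup_comm]
  exact iSup_congr fun π => iSup_comm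

theorem Po_apply_zero (g : S → unitInterval) (s : S) :
    Po P (fun π => g (π 0)) s = g s ⊓ rP P s := by
  simp only [Po, rP, inf_iSup_eq]
  refine iSup_congr fun π => iSup_congr fun hπ => ?_
  rw [hπ, inf_comm]

theorem Po_cons (h : S → unitInterval) (Ψ : (ℕ → S) → unitInterval) (s : S) :
    Po P (fun π => h (π 0) ⊓ Ψ (fun i => π (i + 1))) s = ⨆ u, h s ⊓ P s u ⊓ Po P Ψ u := by
  simp only [Po, inf_iSup_eq]
  apply le_antisymm
  · refine iSup₂_le fun π hπ => le_iSup_of_le (π 1) (le_iSup₂_of_le (fun i => π (i + 1)) rfl ?_)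
    subst hπ
    rw [← inf_iInf_nat_succ fun i => P (π i) (π (i + 1))]
    exact le_of_eq (by ac_rfl)
  · refine iSup_le fun u => iSup₂_le fun π hπ => le_iSup₂_of_le (Stream'.cons s π) rfl ?_
    subst hπ
    rw [← inf_iInf_nat_succ fun i => P (Stream'.cons s π i) (Stream'.cons s π (i + 1))]
    exact le_of_eq (by simp only [Stream'.cons]; ac_rfl)

theorem Po_constrained_reach_eq_matVec_matPow (C g : S → unitInterval) (j : ℕ) (s : S) :
    Po P (fun π => g (π j) ⊓ ⨅ i ∈ Finset.range j, C (π i)) s =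
      matVec (matPow (matComp (diagMat C) P) j) (fun t => g t ⊓ rP P t) s := by
  induction j generalizing s with
  | zero =>
    simp only [Finset.range_zero, Finset.notMem_empty, iInf_of_empty, iInf_top, inf_top_eq,
      Po_apply_zero, matPow, matId_eq_diagMat_top, matVec_diagMat, Pi.top_apply, top_inf_eq]
  | succ j ih =>
    set Ψ : (ℕ → S) → unitInterval := fun π => g (π j) ⊓ ⨅ i ∈ Finset.range j, C (π i)
      with hΨ
    have hsplit : (fun π : ℕ → S => g (π (j + 1)) ⊓ ⨅ i ∈ Finset.range (j + 1), C (π i)) =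
        fun π => C (π 0) ⊓ Ψ (fun i => π (i + 1)) := by
      funext π
      simp only [hΨ, Finset.mem_range, Nat.iInf_lt_succ']
      ac_rfl
    rw [hsplit, Po_cons P C Ψ, matPow_succ', matVec_matComp]
    simp only [ih, matVec, matComp_diagMat_left]

end Possibility

theorem Po_bounded_until_eq_general {S : Type*}
    (P : S → S → unitInterval)
    (B C : S → unitInterval) (n : ℕ) (s : S) :
    Po P (fun π => ⨆ j ∈ Finset.range (n + 1),
        B (π j) ⊓ ⨅ i ∈ Finset.range j, C (π i)) s =
      matVec (matComp (fun u v => ⨆ i ∈ Finset.range (n + 1),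
        matPow (matComp (diagMat C) P) i u v) (diagMat B)) (rP P) s := by
  simp only [Po_iSup, Po_constrained_reach_eq_matVec_matPow, matVec_matComp_diagMat,
    matVec_iSup]

/-- For a finite GPKS and fuzzy states `B, C : S → [0,1]`, for every
`n ≥ 0` and state `s`, the bounded constrained reachability possibility satisfies
`Po(s ⊨ C U^{≤n} B) = ( sup_{0≤i≤n} (D_C ∘ P)^i ∘ D_B ∘ r_P )(s)`, where
`(C U^{≤n} B)(π) = sup_{0≤j≤n} ( B(π_j) ∧ inf_{0≤i<j} C(π_i) )`. -/
theorem Po_bounded_until_eq {S : Type*} [Fintype S] [Nonempty S]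
    {AP : Type*} [Fintype AP]
    (P : S → S → unitInterval) (Init : S → unitInterval) (L : S → AP → unitInterval)
    (B C : S → unitInterval) (n : ℕ) (s : S) :
    Po P (fun π => ⨆ j ∈ Finset.range (n + 1),
        B (π j) ⊓ ⨅ i ∈ Finset.range j, C (π i)) s =
      matVec (matComp (fun u v => ⨆ i ∈ Finset.range (n + 1),
        matPow (matComp (diagMat C) P) i u v) (diagMat B)) (rP P) s :=
  Po_bounded_until_eq_general P B C n s
end

section
/- Let M=(S,P,I,AP,L) be a finite generalized possibilistic Kripke structure and B : S → [0,1] a fuzzy state. Then for every state s ∈ S, Po(s ⊨ □◇B) = sup_{t∈S} ( B(t) ∧ Po(s ⊨ □◇{t}) ), where Po(s ⊨ □◇{t}) is the supremum of inf_{i≥0} P(π_i,π_{i+1}) over all infinite sequences π with π₀ = s in which t occurs infinitely often. -/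
open unitInterval

/-!
Along a path in a finite state space, `B` is large infinitely often exactly when some state
with a large `B`-value is visited infinitely often: from some time on the path only visits
states it visits infinitely often, so `limsup (B ∘ π) = ⨆ { B t | π visits t infinitely often }`.
Substituting this into `Po(s ⊨ □◇B)` and distributing `⊓` over the suprema gives the claim.
-/

open Filter

theorem Filter.eventually_frequently_apply_eq {ι S : Type*} [Finite S] (l : Filter ι)
    (π : ι → S) : ∀ᶠ n in l, ∃ᶠ m in l, π m = π n := by
  have visited_only_if_frequently (t : S) : ∀ᶠ n in l, π n = t → ∃ᶠ m in l, π m = t := by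
    by_cases ht : ∃ᶠ m in l, π m = t
    · exact .of_forall fun _ _ => ht
    · exact (not_frequently.mp ht).mono fun _ hn hnt => absurd hnt hn
  filter_upwards [eventually_all.2 visited_only_if_frequently] with n hn using hn _ rfl

theorem Filter.limsup_comp_eq_iSup_frequently {ι S α : Type*} [Finite S] [CompleteLattice α]
    (l : Filter ι) (B : S → α) (π : ι → S) :
    limsup (B ∘ π) l = ⨆ t, ⨆ (_ : ∃ᶠ n in l, π n = t), B t := by
  apply le_antisymm
  · refine limsup_le_of_le (by isBoundedDefault) ?_
    filter_upwards [eventually_frequently_apply_eq l π] with n hn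
    exact le_iSup₂_of_le (π n) hn le_rfl
  · refine iSup₂_le fun t ht => le_limsup_of_frequently_le ?_
    exact ht.mono fun n hn => hn ▸ le_rfl

theorem iInf_iSup_le_comp_eq_iSup_infinitely_often {S α : Type*} [Finite S] [CompleteLattice α]
    (B : S → α) (π : ℕ → S) :
    ⨅ i : ℕ, ⨆ j : ℕ, ⨆ _ : i ≤ j, B (π j) =
      ⨆ t, ⨆ (_ : ∀ i : ℕ, ∃ j, i ≤ j ∧ π j = t), B t := by
  simpa only [← frequently_atTop, limsup_eq_iInf_iSup_of_nat, ge_iff_le, Function.comp_apply]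
    using limsup_comp_eq_iSup_frequently atTop B π

theorem Po_repeated_reach_fuzzy_via_states_general {S : Type*} [Fintype S]
    (P : S → S → unitInterval)
    (B : S → unitInterval) (s : S) :
    Po P (fun π => ⨅ i : ℕ, ⨆ j : ℕ, ⨆ _ : i ≤ j, B (π j)) s =
      ⨆ t : S, B t ⊓
        ⨆ (π : ℕ → S) (_ : π 0 = s ∧ ∀ i : ℕ, ∃ j, i ≤ j ∧ π j = t),
          ⨅ i, P (π i) (π (i + 1)) := by
  simp only [Po, iInf_iSup_le_comp_eq_iSup_infinitely_often, inf_iSup_eq, iSup_and]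
  rw [iSup_comm]
  refine iSup_congr fun π => ?_
  rw [iSup_comm]
  simp only [inf_comm]

/-- For a finite GPKS and a fuzzy state `B`, for every state `s`,
`Po(s ⊨ □◇B) = sup_{t∈S} ( B(t) ∧ Po(s ⊨ □◇{t}) )`, where `Po(s ⊨ □◇{t})` is the
supremum of `inf_{i≥0} P(π_i,π_{i+1})` over all infinite sequences `π` with `π₀ = s`
in which `t` occurs infinitely often. -/
theorem Po_repeated_reach_fuzzy_via_states {S : Type*} [Fintype S] [Nonempty S]
    {AP : Type*} [Fintype AP]
    (P : S → S → unitInterval) (Init : S → unitInterval) (L : S → AP → unitInterval)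
    (B : S → unitInterval) (s : S) :
    Po P (fun π => ⨅ i : ℕ, ⨆ j : ℕ, ⨆ _ : i ≤ j, B (π j)) s =
      ⨆ t : S, B t ⊓
        ⨆ (π : ℕ → S) (_ : π 0 = s ∧ ∀ i : ℕ, ∃ j, i ≤ j ∧ π j = t),
          ⨅ i, P (π i) (π (i + 1)) :=
  Po_repeated_reach_fuzzy_via_states_general P B s
end

section
/- Let M=(S,P,I,AP,L) be a finite generalized possibilistic Kripke structure with labeling map L : S → Σ into a finite alphabet Σ. Let A = (Q,Σ,δ,q₀,F) be a deterministic fuzzy finite automaton (δ : Q×Σ → Q a deterministic transition function, q₀ ∈ Q the initial state, F : Q → [0,1] a fuzzy set of final states), and let P : Σ^ω → [0,1] be the fuzzy safety property P(σ) = inf_{n≥0} F(δ*(q₀, σ₀σ₁⋯σₙ)), where δ* is the extension of δ to finite words. Then for every state s ∈ S, Po^M(s ⊨ P) = Po^{M⊗A}((s,q_s) ⊨ □B), where q_s = δ(q₀, L(s)), B(s,q) = F(q), the product GPKS M⊗A has state set S×Q and transition possibilities P'((s,q),(s',q')) = P(s,s') if q' = δ(q, L(s')) and 0 otherwise. Explicitly: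 sup_{π∈S^ω, π₀=s} ( inf_{i≥0} P(π_i,π_{i+1}) ∧ inf_{n≥0} F(δ*(q₀, L(π₀)⋯L(π_n))) ) = sup over infinite sequences in S×Q starting at (s,q_s) of ( inf_{i≥0} P'(·,·) ∧ inf_{j≥0} B(·) ). -/
open unitInterval

/-- `dstar δ q w n = δ*(q, w₀w₁⋯wₙ)`: the extension of a deterministic transition
function `δ` to the finite word consisting of the first `n + 1` letters of `w`. -/
def dstar {Q A : Type*} (δ : Q → A → Q) (q : Q) (w : ℕ → A) : ℕ → Q
  | 0 => δ q (w 0)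
  | n + 1 => δ (dstar δ q w n) (w (n + 1))

/-! A path of `M` lifts uniquely to a path of `M ⊗ A` from `(s, q_s)` whose second component is
the run of the automaton on the labels, and the lift has the same possibility. Every other path
of `M ⊗ A` from `(s, q_s)` takes a transition of possibility `0`. So the possibility of any path
property at `(s, q_s)` is a supremum over lifted paths of `M`, and along a lift `□B` is the
safety property. -/

section Product

variable {S Q A : Type*} (P : S → S → I) (L : S → A) (δ : Q → A → Q) (q₀ : Q)

def productTrans [DecidableEq Q] (x y : S × Q) : I :=
  if y.2 = δ x.2 (L y.1) then P x.1 y.1 else 0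

def productRun (π : ℕ → S) (i : ℕ) : S × Q :=
  (π i, dstar δ q₀ (fun j => L (π j)) i)

theorem productRun_zero (π : ℕ → S) : productRun L δ q₀ π 0 = (π 0, δ q₀ (L (π 0))) := rfl

theorem iInf_productTrans_productRun [DecidableEq Q] (π : ℕ → S) :
    ⨅ i, productTrans P L δ (productRun L δ q₀ π i) (productRun L δ q₀ π (i + 1)) =
      ⨅ i, P (π i) (π (i + 1)) :=
  iInf_congr fun _ => if_pos rfl

theorem productRun_fst_eq_self {ρ : ℕ → S × Q} (h₀ : (ρ 0).2 = δ q₀ (L (ρ 0).1))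
    (h : ∀ i, (ρ (i + 1)).2 = δ (ρ i).2 (L (ρ (i + 1)).1)) :
    productRun L δ q₀ (fun i => (ρ i).1) = ρ := by
  funext n
  refine Prod.ext rfl ?_
  induction n with
  | zero => exact h₀.symm
  | succ n ih => exact (congrArg (δ · _) ih).trans (h n).symm

theorem iInf_productTrans_eq_zero [DecidableEq Q] {ρ : ℕ → S × Q} {i : ℕ}
    (hi : (ρ (i + 1)).2 ≠ δ (ρ i).2 (L (ρ (i + 1)).1)) :
    ⨅ i, productTrans P L δ (ρ i) (ρ (i + 1)) = 0 :=
  le_antisymm ((iInf_le _ i).trans_eq (if_neg hi)) unitInterval.nonneg'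

theorem Po_productTrans [DecidableEq Q] (Ψ : (ℕ → S × Q) → I) (s : S) :
    Po (productTrans P L δ) Ψ (s, δ q₀ (L s)) =
      ⨆ (π : ℕ → S) (_ : π 0 = s), (⨅ i, P (π i) (π (i + 1))) ⊓ Ψ (productRun L δ q₀ π) := by
  refine le_antisymm (iSup₂_le fun ρ hρ => ?_) (iSup₂_le fun π hπ => ?_)
  · by_cases h : ∀ i, (ρ (i + 1)).2 = δ (ρ i).2 (L (ρ (i + 1)).1)
    · have h₀ : (ρ 0).2 = δ q₀ (L (ρ 0).1) := by simp [hρ]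
      rw [← productRun_fst_eq_self L δ q₀ h₀ h, iInf_productTrans_productRun]
      exact le_iSup₂_of_le (fun i => (ρ i).1) (by simp [hρ]) le_rfl
    · obtain ⟨i, hi⟩ := not_forall.mp h
      rw [iInf_productTrans_eq_zero P L δ hi]
      exact inf_le_left.trans bot_le
  · refine le_iSup₂_of_le (productRun L δ q₀ π) (by rw [productRun_zero, hπ]) ?_
    rw [iInf_productTrans_productRun]

end Product

theorem Po_fuzzy_regular_safety_general {S Q A : Type*}
    [DecidableEq Q]
    (P : S → S → unitInterval) (L : S → A)
    (δ : Q → A → Q) (q₀ : Q) (F : Q → unitInterval) (s : S) :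
    (⨆ (π : ℕ → S) (_ : π 0 = s),
        (⨅ i, P (π i) (π (i + 1))) ⊓ ⨅ n, F (dstar δ q₀ (fun i => L (π i)) n)) =
      ⨆ (ρ : ℕ → S × Q) (_ : ρ 0 = (s, δ q₀ (L s))),
        (⨅ i, (if (ρ (i + 1)).2 = δ (ρ i).2 (L (ρ (i + 1)).1)
                then P (ρ i).1 (ρ (i + 1)).1 else 0)) ⊓
          ⨅ j, F (ρ j).2 :=
  (Po_productTrans P L δ q₀ (fun ρ => ⨅ j, F (ρ j).2) s).symm

/-- Let `M` be a finite GPKS with labeling `L : S → Σ`, let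
`A = (Q,Σ,δ,q₀,F)` be a deterministic fuzzy finite automaton and let
`P(σ) = inf_{n≥0} F(δ*(q₀, σ₀⋯σₙ))` be the associated fuzzy (regular) safety
property. Then `Po^M(s ⊨ P) = Po^{M⊗A}((s, q_s) ⊨ □B)` where `q_s = δ(q₀, L(s))`,
`B(s,q) = F(q)`, and the product GPKS `M⊗A` has transitions
`P'((s,q),(s',q')) = P(s,s')` if `q' = δ(q, L(s'))` and `0` otherwise. -/
theorem Po_fuzzy_regular_safety {S Q A : Type*}
    [Fintype S] [Nonempty S] [Fintype Q] [Nonempty Q] [DecidableEq Q] [Fintype A]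
    (P : S → S → unitInterval) (Init : S → unitInterval) (L : S → A)
    (δ : Q → A → Q) (q₀ : Q) (F : Q → unitInterval) (s : S) :
    (⨆ (π : ℕ → S) (_ : π 0 = s),
        (⨅ i, P (π i) (π (i + 1))) ⊓ ⨅ n, F (dstar δ q₀ (fun i => L (π i)) n)) =
      ⨆ (ρ : ℕ → S × Q) (_ : ρ 0 = (s, δ q₀ (L s))),
        (⨅ i, (if (ρ (i + 1)).2 = δ (ρ i).2 (L (ρ (i + 1)).1)
                then P (ρ i).1 (ρ (i + 1)).1 else 0)) ⊓
          ⨅ j, F (ρ j).2 :=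
  Po_fuzzy_regular_safety_general P L δ q₀ F s
end

section
/- Let M=(S,P,I,AP,L) be a finite generalized possibilistic Kripke structure with labeling map L : S → Σ into a finite alphabet Σ, and let A = (Q,Σ,δ,J,F) be a fuzzy Büchi automaton with δ : Q×Σ×Q → [0,1], J, F : Q → [0,1]. Let P = L_ω(A) : Σ^ω → [0,1] be the fuzzy ω-regular language accepted by A, i.e. L_ω(A)(σ) = sup over all state sequences q₀q₁q₂⋯ in Q of ( J(q₀) ∧ inf_{i≥0} δ(q_i, σ_{i+1}, q_{i+1}) ∧ inf_{i≥0} sup_{j≥i} F(q_j) ). Then for every state s ∈ S, Po^M(s ⊨ P) = Po^{M_s⊗A}(I' ⊨ □◇B), where the product GPKS M_s⊗A has state set S×Q, initial distribution I'(t,q) = [t = s] ∧ sup_{q₀∈Q} ( J(q₀) ∧ δ(q₀, L(t), q) ), transition possibilities P'((t,q),(t',q')) = P(t,t') ∧ δ(q, L(t'), q'), B(t,q) = F(q), and Po^{M_s⊗A}(I' ⊨ □◇B) = sup over infinite sequences ρ in (S×Q)^ω of ( I'(ρ₀) ∧ inf_{i≥0} P'(ρ_i, ρ_{i+1}) ∧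 inf_{i≥0} sup_{j≥i} B(ρ_j) ). -/
/-!
A path `π` of `M` from `s` together with a run `q` of `A` on its labels is the product path
`ρ i = (π i, q (i + 1))`: the product lags the automaton by one step, so the choice of `q 0`
and the first transition `δ (q 0) (L (π 0)) (q 1)` are absorbed into `I'`, while the Büchi
condition `inf_i sup_{j ≥ i} F (q j)` is insensitive to the shift.
-/

open unitInterval

/-- The fuzzy ω-regular language accepted by a fuzzy Büchi automaton
`A = (Q,Σ,δ,J,F)`:
`L_ω(A)(σ) = sup_{q₀q₁⋯} ( J(q₀) ∧ inf_{i≥0} δ(q_i, σ at step i, q_{i+1}) ∧ inf_{i≥0} sup_{j≥i} F(q_j) )`. -/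
noncomputable def buchiLang {Q A : Type*} (δ : Q → A → Q → unitInterval)
    (J F : Q → unitInterval) (w : ℕ → A) : unitInterval :=
  ⨆ q : ℕ → Q,
    J (q 0) ⊓ (⨅ i, δ (q i) (w i) (q (i + 1))) ⊓ ⨅ i, ⨆ j, ⨆ _ : i ≤ j, F (q j)

theorem unitInterval.bot_eq_zero : (⊥ : I) = 0 := rfl

theorem unitInterval.top_eq_one : (⊤ : I) = 1 := rfl

theorem buchiLang_eq_iSup_cons {Q A : Type*} (δ : Q → A → Q → I) (J F : Q → I)
    (w : ℕ → A) :
    buchiLang δ J F w = ⨆ (q₀ : Q) (q : ℕ → Q),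
      J q₀ ⊓ (δ q₀ (w 0) (q 0) ⊓ ⨅ i, δ (q i) (w (i + 1)) (q (i + 1))) ⊓
        ⨅ i, ⨆ j, ⨆ _ : i ≤ j, F (q j) := by
  have hcons : Function.Surjective fun p : Q × (ℕ → Q) => (Stream'.cons p.1 p.2 : ℕ → Q) :=
    fun q => ⟨(q.head, q.tail), Stream'.eta q⟩
  rw [buchiLang]
  refine (hcons.iSup_comp _).symm.trans ?_
  rw [iSup_prod]
  refine iSup_congr fun q₀ => iSup_congr fun q => ?_
  rw [← inf_iInf_nat_succ]
  congr 1
  have hshift := iInf_iSup_ge_nat_add (fun j => F (Stream'.cons q₀ q j)) 1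
  simp only [ge_iff_le] at hshift
  exact hshift.symm

theorem Po_fuzzy_omega_regular_general {S Q A : Type*}
    [DecidableEq S]
    (P : S → S → unitInterval) (L : S → A)
    (δ : Q → A → Q → unitInterval) (J F : Q → unitInterval) (s : S) :
    (⨆ (π : ℕ → S) (_ : π 0 = s),
        (⨅ i, P (π i) (π (i + 1))) ⊓ buchiLang δ J F (fun i => L (π i))) =
      ⨆ ρ : ℕ → S × Q,
        ((if (ρ 0).1 = s then (1 : unitInterval) else 0) ⊓
            ⨆ q₀ : Q, J q₀ ⊓ δ q₀ (L (ρ 0).1) (ρ 0).2) ⊓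
          (⨅ i, P (ρ i).1 (ρ (i + 1)).1 ⊓ δ (ρ i).2 (L (ρ (i + 1)).1) (ρ (i + 1)).2) ⊓
          ⨅ i, ⨆ j, ⨆ _ : i ≤ j, F (ρ j).2 := by
  rw [← (Equiv.arrowProdEquivProdArrow _ _ _).symm.iSup_comp, iSup_prod]
  refine iSup_congr fun π => ?_
  simp only [buchiLang_eq_iSup_cons, inf_iSup_eq, iSup_inf_eq]
  by_cases h : π 0 = s
  · rw [iSup_pos h, iSup_comm]
    refine iSup_congr fun q => iSup_congr fun q₀ => ?_
    simp only [h, Equiv.arrowProdEquivProdArrow_symm_apply, ↓reduceIte, iInf_inf_eq,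
      ← unitInterval.top_eq_one, top_inf_eq]
    ac_rfl
  · simp [h, ← unitInterval.bot_eq_zero]

/-- Let `M` be a finite GPKS with labeling `L : S → Σ` and
`A = (Q,Σ,δ,J,F)` a fuzzy Büchi automaton accepting `P = L_ω(A)`. Then for every
state `s`, `Po^M(s ⊨ P) = Po^{M_s⊗A}(I' ⊨ □◇B)`, where the product GPKS `M_s⊗A` has
state set `S×Q`, initial distribution `I'(t,q) = [t = s] ∧ sup_{q₀} ( J(q₀) ∧ δ(q₀,L(t),q) )`,
transitions `P'((t,q),(t',q')) = P(t,t') ∧ δ(q,L(t'),q')` and `B(t,q) = F(q)`. -/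
theorem Po_fuzzy_omega_regular {S Q A : Type*}
    [Fintype S] [Nonempty S] [Fintype Q] [Nonempty Q] [DecidableEq S] [Fintype A]
    (P : S → S → unitInterval) (Init : S → unitInterval) (L : S → A)
    (δ : Q → A → Q → unitInterval) (J F : Q → unitInterval) (s : S) :
    (⨆ (π : ℕ → S) (_ : π 0 = s),
        (⨅ i, P (π i) (π (i + 1))) ⊓ buchiLang δ J F (fun i => L (π i))) =
      ⨆ ρ : ℕ → S × Q,
        ((if (ρ 0).1 = s then (1 : unitInterval) else 0) ⊓
            ⨆ q₀ : Q, J q₀ ⊓ δ q₀ (L (ρ 0).1) (ρ 0).2) ⊓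
          (⨅ i, P (ρ i).1 (ρ (i + 1)).1 ⊓ δ (ρ i).2 (L (ρ (i + 1)).1) (ρ (i + 1)).2) ⊓
          ⨅ i, ⨆ j, ⨆ _ : i ≤ j, F (ρ j).2 :=
  Po_fuzzy_omega_regular_general P L δ J F s
end

section
/- Let M=(S,P,I,AP,L) be a finite generalized possibilistic Kripke structure with labeling map L : S → Σ into a finite alphabet Σ, and let A = (Q,Σ,δ,q₀,F) be a deterministic fuzzy Büchi automaton (δ : Q×Σ → Q deterministic, q₀ initial, F : Q → [0,1]), accepting the fuzzy ω-language L_ω(A)(σ) = inf_{i≥0} sup_{j≥i} F(δ*(q₀, σ₀⋯σ_j)). Then for every state s ∈ S, Po^M(s ⊨ L_ω(A)) = Po^{M_s⊗A}((s,q_s) ⊨ □◇B), where q_s = δ(q₀, L(s)), B(t,q) = F(q), and the product GPKS has transition possibilities P'((t,q),(t',q')) = P(t,t') if q' = δ(q, L(t')) and 0 otherwise; i.e. sup_{π∈S^ω, π₀=s} ( inf_{i≥0} P(π_i,π_{i+1}) ∧ inf_{i≥0} sup_{j≥i} F(δ*(q₀, L(π₀)⋯L(π_j))) ) = sup over infinite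 sequences ρ in (S×Q)^ω with ρ₀ = (s,q_s) of ( inf_{i≥0} P'(ρ_i,ρ_{i+1}) ∧ inf_{i≥0} sup_{j≥i} B(ρ_j) ). -/
/-!
A run of the product structure `M ⊗ A` is a path of `M` decorated with automaton states. If the
decoration ever disagrees with `δ`, the run has possibility `0`; otherwise determinism of `δ`
forces it to be the run `δ*(q₀, L(π₀)⋯L(πᵢ))` of `A` on the label word of the underlying path `π`,
so the run and `π` have the same possibility and the same Büchi acceptance degree. Conversely
every path of `M` lifts to such a consistent run.
-/

open unitInterval

section

variable {S Q A : Type*}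

/-- The repeated-reachability degree `(□◇B)(ρ) = inf_{i≥0} sup_{j≥i} B(ρ_j)`. -/
noncomputable def boxDiamond (B : S → I) (ρ : ℕ → S) : I :=
  ⨅ i, ⨆ j, ⨆ _ : i ≤ j, B (ρ j)

/-- The transition possibilities `P'` of the product `M ⊗ A`. -/
noncomputable def prodTrans [DecidableEq Q] (P : S → S → I) (L : S → A) (δ : Q → A → Q)
    (x y : S × Q) : I :=
  if y.2 = δ x.2 (L y.1) then P x.1 y.1 else 0

def prodRun (L : S → A) (δ : Q → A → Q) (q₀ : Q) (π : ℕ → S) (i : ℕ) : S × Q :=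
  (π i, dstar δ q₀ (fun k => L (π k)) i)

theorem dstar_succ (δ : Q → A → Q) (q : Q) (w : ℕ → A) (n : ℕ) :
    dstar δ q w (n + 1) = δ (dstar δ q w n) (w (n + 1)) := rfl

theorem eq_dstar_of_step {δ : Q → A → Q} {q : Q} {w : ℕ → A} {r : ℕ → Q}
    (h0 : r 0 = δ q (w 0)) (hstep : ∀ i, r (i + 1) = δ (r i) (w (i + 1))) :
    r = dstar δ q w := by
  funext i
  induction i with
  | zero => exact h0
  | succ n ih => rw [hstep, ih, dstar_succ]

variable [DecidableEq Q] (P : S → S → I) (L : S → A) (δ : Q → A → Q)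

theorem iInf_prodTrans_prodRun (q₀ : Q) (π : ℕ → S) :
    ⨅ i, prodTrans P L δ (prodRun L δ q₀ π i) (prodRun L δ q₀ π (i + 1)) =
      ⨅ i, P (π i) (π (i + 1)) := by
  simp only [prodTrans, prodRun, dstar_succ, if_true]

theorem iInf_prodTrans_eq_zero {ρ : ℕ → S × Q} {i : ℕ}
    (hi : (ρ (i + 1)).2 ≠ δ (ρ i).2 (L (ρ (i + 1)).1)) :
    ⨅ i, prodTrans P L δ (ρ i) (ρ (i + 1)) = 0 :=
  le_antisymm ((iInf_le _ i).trans (if_neg hi).le) bot_le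

theorem iInf_prodTrans_le_iInf_fst {ρ : ℕ → S × Q}
    (h : ∀ i, (ρ (i + 1)).2 = δ (ρ i).2 (L (ρ (i + 1)).1)) :
    ⨅ i, prodTrans P L δ (ρ i) (ρ (i + 1)) ≤ ⨅ i, P (ρ i).1 (ρ (i + 1)).1 :=
  iInf_mono fun i => (if_pos (h i)).le

theorem Po_le_Po_prodTrans (q₀ : Q) (F : Q → I) (s : S) :
    Po P (fun π => boxDiamond F (dstar δ q₀ fun k => L (π k))) s ≤
      Po (prodTrans P L δ) (boxDiamond fun x => F x.2) (s, δ q₀ (L s)) := by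
  refine iSup₂_le fun π hπ => le_iSup₂_of_le (prodRun L δ q₀ π) (by simp [prodRun, dstar, hπ]) ?_
  rw [iInf_prodTrans_prodRun]
  rfl

theorem Po_prodTrans_le_Po (q₀ : Q) (F : Q → I) (s : S) :
    Po (prodTrans P L δ) (boxDiamond fun x => F x.2) (s, δ q₀ (L s)) ≤
      Po P (fun π => boxDiamond F (dstar δ q₀ fun k => L (π k))) s := by
  refine iSup₂_le fun ρ hρ => ?_
  by_cases h : ∀ i, (ρ (i + 1)).2 = δ (ρ i).2 (L (ρ (i + 1)).1)
  · have hrun : (fun i => (ρ i).2) = dstar δ q₀ fun k => L (ρ k).1 :=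
      eq_dstar_of_step (by rw [hρ]) h
    refine le_iSup₂_of_le (fun i => (ρ i).1) (congrArg Prod.fst hρ) ?_
    exact inf_le_inf (iInf_prodTrans_le_iInf_fst P L δ h) (congrArg (boxDiamond F) hrun).le
  · obtain ⟨i, hi⟩ := not_forall.mp h
    exact inf_le_left.trans ((iInf_prodTrans_eq_zero P L δ hi).trans_le nonneg')

end

theorem Po_deterministic_buchi_general {S Q A : Type*}
    [DecidableEq Q]
    (P : S → S → unitInterval) (L : S → A)
    (δ : Q → A → Q) (q₀ : Q) (F : Q → unitInterval) (s : S) :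
    (⨆ (π : ℕ → S) (_ : π 0 = s),
        (⨅ i, P (π i) (π (i + 1))) ⊓
          ⨅ i, ⨆ j, ⨆ _ : i ≤ j, F (dstar δ q₀ (fun k => L (π k)) j)) =
      ⨆ (ρ : ℕ → S × Q) (_ : ρ 0 = (s, δ q₀ (L s))),
        (⨅ i, (if (ρ (i + 1)).2 = δ (ρ i).2 (L (ρ (i + 1)).1)
                then P (ρ i).1 (ρ (i + 1)).1 else 0)) ⊓
          ⨅ i, ⨆ j, ⨆ _ : i ≤ j, F (ρ j).2 :=
  le_antisymm (Po_le_Po_prodTrans P L δ q₀ F s) (Po_prodTrans_le_Po P L δ q₀ F s)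

/-- Let `M` be a finite GPKS with labeling `L : S → Σ` and
`A = (Q,Σ,δ,q₀,F)` a deterministic fuzzy Büchi automaton accepting
`L_ω(A)(σ) = inf_{i≥0} sup_{j≥i} F(δ*(q₀, σ₀⋯σ_j))`. Then for every state `s`,
`Po^M(s ⊨ L_ω(A)) = Po^{M_s⊗A}((s,q_s) ⊨ □◇B)`, where `q_s = δ(q₀, L(s))`,
`B(t,q) = F(q)` and the product GPKS has transitions
`P'((t,q),(t',q')) = P(t,t')` if `q' = δ(q, L(t'))` and `0` otherwise. -/
theorem Po_deterministic_buchi {S Q A : Type*}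
    [Fintype S] [Nonempty S] [Fintype Q] [Nonempty Q] [DecidableEq Q] [Fintype A]
    (P : S → S → unitInterval) (Init : S → unitInterval) (L : S → A)
    (δ : Q → A → Q) (q₀ : Q) (F : Q → unitInterval) (s : S) :
    (⨆ (π : ℕ → S) (_ : π 0 = s),
        (⨅ i, P (π i) (π (i + 1))) ⊓
          ⨅ i, ⨆ j, ⨆ _ : i ≤ j, F (dstar δ q₀ (fun k => L (π k)) j)) =
      ⨆ (ρ : ℕ → S × Q) (_ : ρ 0 = (s, δ q₀ (L s))),
        (⨅ i, (if (ρ (i + 1)).2 = δ (ρ i).2 (L (ρ (i + 1)).1)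
                then P (ρ i).1 (ρ (i + 1)).1 else 0)) ⊓
          ⨅ i, ⨆ j, ⨆ _ : i ≤ j, F (ρ j).2 :=
  Po_deterministic_buchi_general P L δ q₀ F s
end
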